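/- arXiv:1302.1465 — 6 statements merged into one kernel-verified Lean document; each statement's English description precedes it below -/
import Mathlib

section
/- Let X be an invertible object in a symmetric monoidal category. For any tensor word w in n variables each appearing exactly once, and any even permutation σ ∈ Σ_n, the automorphism of w(X,...,X) obtained from the unique coherence natural isomorphism F_w → F_{wσ} (evaluated at (X,...,X)) is the identity. In particular, the cyclic permutation map (X ⊗ X) ⊗ X → (X ⊗ X) ⊗ X given by the symmetry t_{X⊗X,X} followed by the associator equals the identity. -/
/-!
Every endomorphism of an invertible object `Z` is the action `λ⁻¹ ≫ s ▷ Z ≫ λ` of a scalar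
`s : 𝟙 ⟶ 𝟙`; scalar actions are natural and, in a braided category, commute with whiskering.
Since `X ⊗ X` is invertible, `β_{X,X}` is the action of a scalar `s`. The hexagon writes the
cyclic permutation as `X ◁ β_{X,X}` followed by `β_{X,X} ▷ X`, i.e. as the action of `s ≫ s`
on `(X ⊗ X) ⊗ X`, which is `(β_{X,X} ≫ β_{X,X}) ▷ X = 𝟙` by symmetry.
-/

open CategoryTheory MonoidalCategory

namespace CategoryTheory.MonoidalCategory

variable {C : Type*} [Category C] [MonoidalCategory C]

def scalarAction (s : 𝟙_ C ⟶ 𝟙_ C) (A : C) : A ⟶ A :=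
  (λ_ A).inv ≫ s ▷ A ≫ (λ_ A).hom

theorem scalarAction_naturality (s : 𝟙_ C ⟶ 𝟙_ C) {A B : C} (h : A ⟶ B) :
    scalarAction s A ≫ h = h ≫ scalarAction s B := by
  simp only [scalarAction, Category.assoc]
  rw [← leftUnitor_naturality, ← whisker_exchange_assoc, leftUnitor_inv_naturality_assoc]

theorem scalarAction_comp (s t : 𝟙_ C ⟶ 𝟙_ C) (A : C) :
    scalarAction s A ≫ scalarAction t A = scalarAction (s ≫ t) A := by
  simp [scalarAction]

theorem scalarAction_whiskerRight (s : 𝟙_ C ⟶ 𝟙_ C) (A X : C) :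
    scalarAction s A ▷ X = scalarAction s (A ⊗ X) := by
  simp only [scalarAction, comp_whiskerRight, leftUnitor_tensor_hom, leftUnitor_tensor_inv,
    Category.assoc]
  rw [← associator_naturality_left_assoc]
  simp

theorem whiskerLeft_scalarAction [BraidedCategory C] (s : 𝟙_ C ⟶ 𝟙_ C) (X A : C) :
    X ◁ scalarAction s A = scalarAction s (X ⊗ A) := by
  calc X ◁ scalarAction s A
      = (β_ X A).hom ≫ scalarAction s A ▷ X ≫ (β_ X A).inv := by
        rw [← BraidedCategory.braiding_naturality_right_assoc, Iso.hom_inv_id, Category.comp_id]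
    _ = scalarAction s (X ⊗ A) := by
        rw [scalarAction_whiskerRight, ← reassoc_of% scalarAction_naturality, Iso.hom_inv_id,
          Category.comp_id]

theorem exists_eq_scalarAction {W Z : C} (u : 𝟙_ C ≅ W ⊗ Z) (u' : 𝟙_ C ≅ Z ⊗ W)
    (f : Z ⟶ Z) : ∃ s : 𝟙_ C ⟶ 𝟙_ C, f = scalarAction s Z := by
  set s : 𝟙_ C ⟶ 𝟙_ C := u'.hom ≫ f ▷ W ≫ u'.inv with hs
  refine ⟨s, ?_⟩
  -- Conjugating by the automorphism `ψ` turns `f` into the action of `s`, which commutes with `ψ`.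
  let ψ : Z ≅ Z :=
    (ρ_ Z).symm ≪≫ whiskerLeftIso Z u ≪≫ (α_ Z W Z).symm ≪≫ whiskerRightIso u'.symm Z ≪≫ λ_ Z
  have hslide : f ▷ W ≫ u'.inv = u'.inv ≫ s := by simp [hs]
  have hconj : f ≫ ψ.hom = ψ.hom ≫ scalarAction s Z := by
    have hslideZ : f ▷ W ▷ Z ≫ u'.inv ▷ Z = u'.inv ▷ Z ≫ s ▷ Z := by
      rw [← comp_whiskerRight, hslide, comp_whiskerRight]
    simp only [ψ, scalarAction, Iso.trans_hom, Iso.symm_hom, whiskerLeftIso_hom,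
      whiskerRightIso_hom, Category.assoc, Iso.hom_inv_id_assoc]
    rw [rightUnitor_inv_naturality_assoc, ← whisker_exchange_assoc,
      associator_inv_naturality_left_assoc, reassoc_of% hslideZ]
  rw [← cancel_mono ψ.hom, hconj, scalarAction_naturality]

end CategoryTheory.MonoidalCategory

/-- For an invertible object `X` in a symmetric monoidal category, the automorphism of
`(X ⊗ X) ⊗ X` coming from an even (cyclic) permutation of the factors is the identity:
the symmetry `t_{X⊗X,X} : (X ⊗ X) ⊗ X ⟶ X ⊗ (X ⊗ X)` followed by the (inverse) associator
`X ⊗ (X ⊗ X) ⟶ (X ⊗ X) ⊗ X` equals the identity. -/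
theorem cyclic_permutation_id {C : Type*} [Category C] [MonoidalCategory C]
    [SymmetricCategory C] (X : C) (hX : ∃ Y : C, Nonempty (𝟙_ C ≅ Y ⊗ X)) :
    (β_ (X ⊗ X) X).hom ≫ (α_ X X X).inv = 𝟙 ((X ⊗ X) ⊗ X) := by
  obtain ⟨Y, ⟨e⟩⟩ := hX
  let u : 𝟙_ C ≅ (Y ⊗ Y) ⊗ (X ⊗ X) :=
    e ≪≫ whiskerLeftIso Y ((λ_ X).symm ≪≫ whiskerRightIso e X ≪≫ α_ Y X X) ≪≫
      (α_ Y Y (X ⊗ X)).symm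
  obtain ⟨s, hs⟩ := exists_eq_scalarAction u (u ≪≫ β_ _ _) (β_ X X).hom
  have hs2 : scalarAction (s ≫ s) (X ⊗ X) = 𝟙 _ := by
    rw [← scalarAction_comp, ← hs, SymmetricCategory.symmetry]
  rw [BraidedCategory.braiding_tensor_left_hom]
  simp only [Category.assoc, Iso.hom_inv_id, Category.comp_id]
  rw [hs, whiskerLeft_scalarAction, scalarAction_whiskerRight,
    reassoc_of% scalarAction_naturality, Iso.hom_inv_id_assoc, scalarAction_comp,
    ← scalarAction_whiskerRight, hs2, id_whiskerRight]
end

section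
/- If X is an invertible object in a symmetric monoidal category, then tr(id_X) ∘ tr(id_X) = id_S; that is, the trace of the identity on X is an automorphism of S of order dividing 2. -/
/-!
Since `α : 𝟙 ⟶ Y ⊗ X` is invertible, whiskering by `X` is faithful, so it suffices to square
`X ◁ tr(id_X)`. The first triangle identity pins down `αhat` in terms of `α⁻¹`, and then
`X ◁ tr(id_X)` is the conjugate by `X ◁ α` of the morphism `X ⊗ (Y ⊗ X) ⟶ X ⊗ (Y ⊗ X)` that
reverses the three factors. In a symmetric category reversing three factors twice is the identity.
-/

open CategoryTheory MonoidalCategory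

variable {C : Type*} [Category C] [MonoidalCategory C] [SymmetricCategory C]

/-- Left dual data for `X`. -/
structure LeftDualData (X : C) where
  Y : C
  α : 𝟙_ C ⟶ Y ⊗ X
  αhat : X ⊗ Y ⟶ 𝟙_ C
  triangle₁ : (ρ_ X).inv ≫ (X ◁ α) ≫ (α_ X Y X).inv ≫ (αhat ▷ X) ≫ (λ_ X).hom = 𝟙 X
  triangle₂ : (λ_ Y).inv ≫ (α ▷ Y) ≫ (α_ Y X Y).hom ≫ (Y ◁ αhat) ≫ (ρ_ Y).hom = 𝟙 Y

/-- The trace of `f : X ⟶ X` with respect to a left dual of `X`. -/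
def trOf {X : C} (D : LeftDualData X) (f : X ⟶ X) : 𝟙_ C ⟶ 𝟙_ C :=
  D.α ≫ (D.Y ◁ f) ≫ (β_ D.Y X).hom ≫ D.αhat

omit [SymmetricCategory C] in
theorem whiskerLeft_injective_of_isIso {X Y : C} (a : 𝟙_ C ⟶ Y ⊗ X) [IsIso a] {A B : C}
    {f g : A ⟶ B} (h : X ◁ f = X ◁ g) : f = g := by
  have : 𝟙_ C ◁ f = 𝟙_ C ◁ g := by
    rw [← cancel_mono (a ▷ B), whisker_exchange, whisker_exchange, tensor_whiskerLeft,
      tensor_whiskerLeft, h]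
  simpa using this

def reverseTriple (X Y Z : C) : X ⊗ (Y ⊗ Z) ⟶ Z ⊗ (Y ⊗ X) :=
  X ◁ (β_ Y Z).hom ≫ (β_ X (Z ⊗ Y)).hom ≫ (α_ Z Y X).hom

theorem reverseTriple_comp_reverseTriple (X Y Z : C) :
    reverseTriple X Y Z ≫ reverseTriple Z Y X = 𝟙 _ := by
  simp [reverseTriple, BraidedCategory.braiding_tensor_right_hom,
    ← whiskerLeft_comp_assoc, ← whiskerLeft_comp, ← comp_whiskerRight_assoc]

namespace LeftDualData

variable {X : C} (D : LeftDualData X) [IsIso D.α]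

omit [SymmetricCategory C] in
theorem αhat_whiskerRight :
    D.αhat ▷ X = (α_ X D.Y X).hom ≫ X ◁ inv D.α ≫ (ρ_ X).hom ≫ (λ_ X).inv := by
  rw [← cancel_epi ((ρ_ X).inv ≫ X ◁ D.α ≫ (α_ X D.Y X).inv), ← cancel_mono (λ_ X).hom]
  simpa [← whiskerLeft_comp_assoc] using D.triangle₁

theorem whiskerLeft_αhat :
    X ◁ D.αhat = (β_ X (X ⊗ D.Y)).hom ≫ (α_ X D.Y X).hom ≫ X ◁ inv D.α := by
  rw [← cancel_mono (β_ X (𝟙_ C)).hom, BraidedCategory.braiding_naturality_right,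
    αhat_whiskerRight, ← braiding_leftUnitor]
  simp

theorem whiskerLeft_trOf_id :
    X ◁ trOf D (𝟙 X) = X ◁ D.α ≫ reverseTriple X D.Y X ≫ X ◁ inv D.α := by
  simp [trOf, reverseTriple, whiskerLeft_αhat]

end LeftDualData

/-- If `X` is invertible (the coevaluation of its left dual is an isomorphism), then
`tr(id_X) ∘ tr(id_X) = id_S`: the trace of the identity is an automorphism of `S` of order
dividing `2`. -/
theorem tr_id_sq {X : C} (D : LeftDualData X) (hα : IsIso D.α) :
    trOf D (𝟙 X) ≫ trOf D (𝟙 X) = 𝟙 (𝟙_ C) := by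
  apply whiskerLeft_injective_of_isIso D.α
  rw [whiskerLeft_comp, D.whiskerLeft_trOf_id]
  simp [reassoc_of% reverseTriple_comp_reverseTriple]
end

section
/- The assignment X ↦ τ_X := tr(id_X) descends to a group homomorphism τ : Pic(C) → Aut(S) from the Picard group of isomorphism classes of invertible objects to the automorphism group of the unit, whose image lies in the 2-torsion subgroup of Aut(S). In particular τ_{X⊗Z} = τ_X ∘ τ_Z for invertible X, Z. -/
/-! A left dual of `X` is an exact pairing `(Y, X)` in Mathlib's sense, and `τ_X` is its
dimension `η ≫ β ≫ ε`. This does not depend on the pairing: the mate of `𝟙 X` compares two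
pairings, and it slides through the braiding. For the tensor pairing of `X₁ ⊗ X₂` the loop of
`X₂` sits inside the loop of `X₁`; symmetry unlinks them, giving `τ_{X₁ ⊗ X₂} = τ_{X₁} τ_{X₂}`,
and scalars commute by Eckmann–Hilton. If the coevaluation of `X` is invertible then
`X^∨ ⊗ X ≅ 𝟙`, so `τ_X² = τ_{X^∨} τ_X = τ_{X^∨ ⊗ X} = τ_𝟙 = 1`, as the swapped pairing shows
`τ_{X^∨} = τ_X`. -/

open CategoryTheory MonoidalCategory

variable {C : Type*} [Category C] [MonoidalCategory C] [SymmetricCategory C]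

namespace CategoryTheory

section

variable {C : Type*} [Category C] [MonoidalCategory C]

theorem MonoidalCategory.unit_endo_comm (s t : 𝟙_ C ⟶ 𝟙_ C) : s ≫ t = t ≫ s := by
  have h := whisker_exchange s t
  simp only [id_whiskerLeft, MonoidalCategory.whiskerRight_id, unitors_equal,
    unitors_inv_equal, Category.assoc, Iso.inv_hom_id_assoc, Iso.cancel_iso_hom_left] at h
  simpa using congrArg (· ≫ (ρ_ (𝟙_ C)).hom) h.symm

end

open BraidedCategory in
theorem SymmetricCategory.nested_comp_braiding {X₁ X₂ Y₁ Y₂ : C}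
    (u : 𝟙_ C ⟶ X₁ ⊗ Y₁) (v : 𝟙_ C ⟶ X₂ ⊗ Y₂) :
    (u ⊗≫ (X₁ ◁ v) ▷ Y₁ ⊗≫ 𝟙 _) ≫ (β_ (X₁ ⊗ X₂) (Y₂ ⊗ Y₁)).hom =
      u ⊗≫ (X₁ ⊗ Y₁) ◁ (v ≫ (β_ X₂ Y₂).hom) ⊗≫
        ((β_ (X₁ ⊗ Y₁) Y₂).hom ≫ Y₂ ◁ (β_ X₁ Y₁).hom) ▷ X₂ ⊗≫ 𝟙 _ := by
  calc (u ⊗≫ (X₁ ◁ v) ▷ Y₁ ⊗≫ 𝟙 _) ≫ (β_ (X₁ ⊗ X₂) (Y₂ ⊗ Y₁)).hom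
      = u ⊗≫ X₁ ◁ v ▷ Y₁ ⊗≫ X₁ ◁ (β_ X₂ Y₂).hom ▷ Y₁ ⊗≫
          ((β_ X₁ Y₂).hom ▷ (X₂ ⊗ Y₁) ≫ (Y₂ ⊗ X₁) ◁ (β_ X₂ Y₁).hom) ⊗≫
          Y₂ ◁ (β_ X₁ Y₁).hom ▷ X₂ ⊗≫ 𝟙 _ := by
        rw [braiding_tensor_right_hom, braiding_tensor_left_hom, braiding_tensor_left_hom]
        monoidal
    _ = u ⊗≫ X₁ ◁ ((v ≫ (β_ X₂ Y₂).hom) ▷ Y₁) ⊗≫ (X₁ ⊗ Y₂) ◁ (β_ X₂ Y₁).hom ⊗≫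
          X₁ ◁ ((β_ Y₂ Y₁).hom ≫ (β_ Y₁ Y₂).hom) ▷ X₂ ⊗≫ (β_ X₁ Y₂).hom ▷ (Y₁ ⊗ X₂) ⊗≫
          Y₂ ◁ (β_ X₁ Y₁).hom ▷ X₂ ⊗≫ 𝟙 _ := by
        -- the only use of symmetry: `β_ Y₂ Y₁ ≫ β_ Y₁ Y₂ = 𝟙` unlinks the two loops
        rw [← whisker_exchange, SymmetricCategory.symmetry]; monoidal
    _ = u ⊗≫ X₁ ◁ ((v ≫ (β_ X₂ Y₂).hom) ▷ Y₁ ≫ (β_ (Y₂ ⊗ X₂) Y₁).hom) ⊗≫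
          X₁ ◁ (β_ Y₁ Y₂).hom ▷ X₂ ⊗≫ (β_ X₁ Y₂).hom ▷ (Y₁ ⊗ X₂) ⊗≫
          Y₂ ◁ (β_ X₁ Y₁).hom ▷ X₂ ⊗≫ 𝟙 _ := by
        rw [braiding_tensor_left_hom]; monoidal
    _ = u ⊗≫ (X₁ ⊗ Y₁) ◁ (v ≫ (β_ X₂ Y₂).hom) ⊗≫
          ((β_ (X₁ ⊗ Y₁) Y₂).hom ≫ Y₂ ◁ (β_ X₁ Y₁).hom) ▷ X₂ ⊗≫ 𝟙 _ := by
        rw [braiding_naturality_left, braiding_tensorUnit_left, braiding_tensor_left_hom]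
        monoidal

namespace ExactPairing

section Braided

variable {C : Type*} [Category C] [MonoidalCategory C] [BraidedCategory C]

def dim {X Y : C} (p : ExactPairing X Y) : 𝟙_ C ⟶ 𝟙_ C :=
  η_ X Y ≫ (β_ X Y).hom ≫ ε_ X Y

theorem dim_eq_of_hom {X₁ X₂ Y : C} (p₁ : ExactPairing X₁ Y) (p₂ : ExactPairing X₂ Y)
    (f : X₁ ⟶ X₂) (hη : η_ X₁ Y ≫ f ▷ Y = η_ X₂ Y) (hε : Y ◁ f ≫ ε_ X₂ Y = ε_ X₁ Y) :
    p₁.dim = p₂.dim := by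
  rw [dim, dim, ← hε, ← hη, Category.assoc, BraidedCategory.braiding_naturality_left_assoc]

theorem dim_eq {X₁ X₂ Y : C} (p₁ : ExactPairing X₁ Y) (p₂ : ExactPairing X₂ Y) :
    p₁.dim = p₂.dim := by
  refine dim_eq_of_hom p₁ p₂ (@leftAdjointMate C _ _ Y Y ⟨X₂⟩ ⟨X₁⟩ (𝟙 Y)) ?_ ?_
  · simpa using @coevaluation_comp_leftAdjointMate C _ _ Y Y ⟨X₂⟩ ⟨X₁⟩ (𝟙 Y)
  · simpa using @leftAdjointMate_comp_evaluation C _ _ Y Y ⟨X₂⟩ ⟨X₁⟩ (𝟙 Y)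

theorem dim_unit : (exactPairingUnit : ExactPairing (𝟙_ C) (𝟙_ C)).dim = 𝟙 _ := by
  change (ρ_ _).inv ≫ (β_ _ _).hom ≫ (ρ_ _).hom = _
  simp [unitors_inv_equal]

theorem dim_swap {X Y : C} (p : ExactPairing X Y) :
    (BraidedCategory.exactPairing_swap X Y).dim = p.dim := by
  change (η_ X Y ≫ (β_ Y X).inv) ≫ (β_ Y X).hom ≫ (β_ X Y).hom ≫ ε_ X Y = _
  simp [dim]

theorem dim_congrRight {X Y Y' : C} (p : ExactPairing X Y') (i : Y ≅ Y') :
    (exactPairingCongrRight i : ExactPairing X Y).dim = p.dim := by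
  change (η_ X Y' ≫ X ◁ i.inv) ≫ (β_ X Y).hom ≫ i.hom ▷ X ≫ ε_ X Y' = _
  simp [dim, BraidedCategory.braiding_naturality_right_assoc]

theorem dim_eq_of_iso {X X' Y Y' : C} (p : ExactPairing X Y) (p' : ExactPairing X' Y')
    (i : Y ≅ Y') : p.dim = p'.dim := by
  rw [p.dim_eq (@exactPairingCongrRight C _ _ X' Y Y' p' i), dim_congrRight]

end Braided

open BraidedCategory in
theorem dim_tensor {X₁ X₂ Y₁ Y₂ : C} (p : ExactPairing X₁ Y₁) (q : ExactPairing X₂ Y₂) :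
    (ExactPairing.tensor : ExactPairing (X₁ ⊗ X₂) (Y₂ ⊗ Y₁)).dim = p.dim ≫ q.dim := by
  calc (ExactPairing.tensor : ExactPairing (X₁ ⊗ X₂) (Y₂ ⊗ Y₁)).dim
      = ((η_ X₁ Y₁ ⊗≫ (X₁ ◁ η_ X₂ Y₂) ▷ Y₁ ⊗≫ 𝟙 _) ≫ (β_ (X₁ ⊗ X₂) (Y₂ ⊗ Y₁)).hom) ≫
          (𝟙 _ ⊗≫ Y₂ ◁ (ε_ X₁ Y₁ ▷ X₂) ⊗≫ ε_ X₂ Y₂) := by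
        rw [dim, tensor_coevaluation, tensor_evaluation, Category.assoc]
    _ = η_ X₁ Y₁ ⊗≫ (X₁ ⊗ Y₁) ◁ (η_ X₂ Y₂ ≫ (β_ X₂ Y₂).hom) ⊗≫
          ((β_ (X₁ ⊗ Y₁) Y₂).hom ≫ Y₂ ◁ ((β_ X₁ Y₁).hom ≫ ε_ X₁ Y₁)) ▷ X₂ ⊗≫ ε_ X₂ Y₂ := by
        rw [SymmetricCategory.nested_comp_braiding]; monoidal
    _ = η_ X₁ Y₁ ⊗≫ ((X₁ ⊗ Y₁) ◁ (η_ X₂ Y₂ ≫ (β_ X₂ Y₂).hom) ≫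
          ((β_ X₁ Y₁).hom ≫ ε_ X₁ Y₁) ▷ (Y₂ ⊗ X₂)) ⊗≫ ε_ X₂ Y₂ := by
        rw [← braiding_naturality_left, braiding_tensorUnit_left]; monoidal
    _ = p.dim ≫ q.dim := by
        rw [whisker_exchange, MonoidalCategory.whiskerRight_id, id_whiskerLeft, dim, dim]
        monoidal

theorem dim_eq_comp_of_tensorObj {X₁ X₂ Y₁ Y₂ W : C} (r : ExactPairing W (Y₁ ⊗ Y₂))
    (p : ExactPairing X₁ Y₁) (q : ExactPairing X₂ Y₂) : r.dim = p.dim ≫ q.dim := by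
  rw [r.dim_eq (ExactPairing.tensor : ExactPairing (X₂ ⊗ X₁) (Y₁ ⊗ Y₂)), dim_tensor,
    MonoidalCategory.unit_endo_comm]

theorem dim_comp_self_of_isIso {X Y : C} (p : ExactPairing X Y) (h : IsIso (η_ X Y)) :
    p.dim ≫ p.dim = 𝟙 _ := by
  let := BraidedCategory.exactPairing_swap X Y
  calc p.dim ≫ p.dim
      = (ExactPairing.tensor : ExactPairing (X ⊗ Y) (X ⊗ Y)).dim := by
        rw [dim_tensor, dim_swap]
    _ = exactPairingUnit.dim := dim_eq_of_iso _ _ (asIso (η_ X Y)).symm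
    _ = 𝟙 _ := dim_unit

end ExactPairing

end CategoryTheory

@[reducible]
def LeftDualData.exactPairing {X : C} (D : LeftDualData X) : ExactPairing D.Y X where
  coevaluation' := D.α
  evaluation' := D.αhat
  coevaluation_evaluation' := by
    simpa using congrArg ((ρ_ X).hom ≫ · ≫ (λ_ X).inv) D.triangle₁
  evaluation_coevaluation' := by
    simpa using congrArg ((λ_ D.Y).hom ≫ · ≫ (ρ_ D.Y).inv) D.triangle₂

theorem LeftDualData.trOf_id_eq_dim {X : C} (D : LeftDualData X) :
    trOf D (𝟙 X) = D.exactPairing.dim := by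
  simp only [trOf, whiskerLeft_id, Category.id_comp]
  rfl

theorem tau_pic_hom_general {X Z : C} (DX : LeftDualData X) (DZ : LeftDualData Z)
    (DXZ : LeftDualData (X ⊗ Z)) (hX : IsIso DX.α) :
    (trOf DXZ (𝟙 (X ⊗ Z)) = trOf DX (𝟙 X) ≫ trOf DZ (𝟙 Z)) ∧
    (trOf DX (𝟙 X) ≫ trOf DX (𝟙 X) = 𝟙 (𝟙_ C)) ∧
    (∀ (X' : C) (DX' : LeftDualData X'), (X ≅ X') → trOf DX (𝟙 X) = trOf DX' (𝟙 X')) := by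
  simp only [LeftDualData.trOf_id_eq_dim]
  refine ⟨?_, ?_, fun X' DX' i => ?_⟩
  · exact DXZ.exactPairing.dim_eq_comp_of_tensorObj DX.exactPairing DZ.exactPairing
  · exact DX.exactPairing.dim_comp_self_of_isIso hX
  · exact DX.exactPairing.dim_eq_of_iso DX'.exactPairing i

/-- The assignment `X ↦ τ_X := tr(id_X)` descends to a group homomorphism
`Pic(C) → Aut(S)` landing in the `2`-torsion: for invertible `X`, `Z` (with chosen left
duals whose coevaluations are isomorphisms) one has `τ_{X⊗Z} = τ_X ∘ τ_Z`, each
`τ_X` squares to the identity, and `τ_X` only depends on the isomorphism class of `X`. -/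
theorem tau_pic_hom {X Z : C} (DX : LeftDualData X) (DZ : LeftDualData Z)
    (DXZ : LeftDualData (X ⊗ Z)) (hX : IsIso DX.α) (hZ : IsIso DZ.α) :
    (trOf DXZ (𝟙 (X ⊗ Z)) = trOf DX (𝟙 X) ≫ trOf DZ (𝟙 Z)) ∧
    (trOf DX (𝟙 X) ≫ trOf DX (𝟙 X) = 𝟙 (𝟙_ C)) ∧
    (∀ (X' : C) (DX' : LeftDualData X'), (X ≅ X') → trOf DX (𝟙 X) = trOf DX' (𝟙 X')) :=
  tau_pic_hom_general DX DZ DXZ hX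
end

section
/- Let X be an invertible object in a symmetric monoidal category with symmetry (twist) t_{X,X} : X ⊗ X → X ⊗ X. Then tr(id_X) = D(t_{X,X}) = tr(t_{X,X}), where D denotes the D-invariant of a self-map of the invertible object X ⊗ X. -/
open CategoryTheory MonoidalCategory

variable {C : Type*} [Category C] [MonoidalCategory C] [SymmetricCategory C]

/-- The `D`-invariant of `g : W ⟶ W` with respect to a chosen inverse `(V, δ)` of the
invertible object `W`. -/
def Dinv {W V : C} (δ : 𝟙_ C ≅ V ⊗ W) (g : W ⟶ W) : 𝟙_ C ⟶ 𝟙_ C :=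
  δ.hom ≫ (V ◁ g) ≫ δ.inv

open BraidedCategory

/-!
An endomorphism `g` of an invertible object `W` (with `δ : 𝟙 ≅ V ⊗ W`) is multiplication by the
scalar `Dinv δ g`; in particular the twist of `X ⊗ X` is multiplication by `u := D(t_{X,X})`, and
`u ≫ u = 𝟙` because the twist is an involution. For any `W` with a left dual whose twist `t_{W,W}`
is multiplication by a scalar `u`, the hexagon identity turns `tr(id_W) ▷ W` into `u ▷ W` composed
with a zigzag, so `tr(id_W) = u` as soon as `W` is invertible. For `W = X` this is the first
equality. For `W = X ⊗ X` the twist is multiplication by `u⁴ = 𝟙`, so `tr(id_{X ⊗ X}) = 𝟙` and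
`tr(t_{X,X}) = u · tr(id_{X ⊗ X}) = u`.
-/

section Monoidal

variable {C : Type*} [Category C] [MonoidalCategory C]

def scalarEnd (u : 𝟙_ C ⟶ 𝟙_ C) (W : C) : W ⟶ W :=
  (λ_ W).inv ≫ u ▷ W ≫ (λ_ W).hom

variable (u v : 𝟙_ C ⟶ 𝟙_ C)

lemma scalarEnd_naturality {A B : C} (h : A ⟶ B) : h ≫ scalarEnd u B = scalarEnd u A ≫ h := by
  simp only [scalarEnd]
  calc h ≫ (λ_ B).inv ≫ u ▷ B ≫ (λ_ B).hom
      = (λ_ A).inv ≫ (𝟙_ C ◁ h ≫ u ▷ B) ≫ (λ_ B).hom := by simp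
    _ = (λ_ A).inv ≫ (u ▷ A ≫ 𝟙_ C ◁ h) ≫ (λ_ B).hom := by rw [whisker_exchange]
    _ = ((λ_ A).inv ≫ u ▷ A ≫ (λ_ A).hom) ≫ h := by simp

lemma scalarEnd_unit : scalarEnd u (𝟙_ C) = u := by
  simp [scalarEnd, unitors_equal, unitors_inv_equal]

lemma scalarEnd_comp (W : C) : scalarEnd u W ≫ scalarEnd v W = scalarEnd (u ≫ v) W := by
  simp [scalarEnd]

lemma scalarEnd_id (W : C) : scalarEnd (𝟙 (𝟙_ C)) W = 𝟙 W := by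
  simp [scalarEnd]

lemma scalarEnd_whiskerRight (V W : C) : scalarEnd u W ▷ V = scalarEnd u (W ⊗ V) := by
  simp only [scalarEnd]
  monoidal

lemma eq_of_whiskerLeft_eq {A B U U' : C} (e : 𝟙_ C ≅ A ⊗ B) {f g : U ⟶ U'}
    (h : B ◁ f = B ◁ g) : f = g := by
  have conj : ∀ k : U ⟶ U', k = (λ_ U).inv ≫ e.hom ▷ U ≫ (α_ A B U).hom ≫ A ◁ B ◁ k ≫
      (α_ A B U').inv ≫ e.inv ▷ U' ≫ (λ_ U').hom := fun k => by
    rw [associator_inv_naturality_right_assoc, whisker_exchange_assoc]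
    simp
  rw [conj f, conj g, h]

lemma LeftDualData.triangle₁' {X : C} (D : LeftDualData X) :
    X ◁ D.α ≫ (α_ X D.Y X).inv ≫ D.αhat ▷ X = (ρ_ X).hom ≫ (λ_ X).inv := by
  rw [← cancel_epi (ρ_ X).inv, ← cancel_mono (λ_ X).hom]
  simpa using D.triangle₁

end Monoidal

section Braided

variable {C : Type*} [Category C] [MonoidalCategory C] [BraidedCategory C] (u : 𝟙_ C ⟶ 𝟙_ C)

lemma scalarEnd_eq_whiskerLeft (W : C) : scalarEnd u W = (ρ_ W).inv ≫ W ◁ u ≫ (ρ_ W).hom := by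
  rw [scalarEnd, ← braiding_rightUnitor, braiding_naturality_left_assoc,
    leftUnitor_inv_braiding_assoc]

lemma whiskerLeft_scalarEnd (V W : C) : V ◁ scalarEnd u W = scalarEnd u (V ⊗ W) := by
  rw [scalarEnd_eq_whiskerLeft, scalarEnd_eq_whiskerLeft]
  monoidal

lemma Dinv_scalarEnd {V W : C} (δ : 𝟙_ C ≅ V ⊗ W) : Dinv δ (scalarEnd u W) = u := by
  rw [Dinv, whiskerLeft_scalarEnd, reassoc_of% scalarEnd_naturality]
  simp [scalarEnd_unit]

lemma eq_scalarEnd_Dinv {V W : C} (δ : 𝟙_ C ≅ V ⊗ W) (g : W ⟶ W) :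
    g = scalarEnd (Dinv δ g) W := by
  apply eq_of_whiskerLeft_eq (δ ≪≫ β_ V W)
  have hg : V ◁ g = δ.inv ≫ Dinv δ g ≫ δ.hom := by simp [Dinv]
  rw [whiskerLeft_scalarEnd, hg, ← scalarEnd_unit (Dinv δ g), ← scalarEnd_naturality]
  simp only [scalarEnd_unit, Iso.inv_hom_id_assoc]

lemma scalarEnd_injective {V W : C} (δ : 𝟙_ C ≅ V ⊗ W) :
    Function.Injective fun u : 𝟙_ C ⟶ 𝟙_ C => scalarEnd u W := fun u v h => by
  rw [← Dinv_scalarEnd u δ, ← Dinv_scalarEnd v δ]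
  exact congrArg (Dinv δ) h

lemma braiding_tensor_self_eq_scalarEnd {X : C} (h : (β_ X X).hom = scalarEnd u (X ⊗ X)) :
    (β_ (X ⊗ X) (X ⊗ X)).hom = scalarEnd (u ≫ u ≫ u ≫ u) ((X ⊗ X) ⊗ (X ⊗ X)) := by
  rw [braiding_tensor_left_hom]
  simp only [braiding_tensor_right_hom, h, MonoidalCategory.whiskerLeft_comp, comp_whiskerRight,
    scalarEnd_whiskerRight, whiskerLeft_scalarEnd, Category.assoc, reassoc_of% scalarEnd_naturality,
    reassoc_of% scalarEnd_comp]
  monoidal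

end Braided

variable (u : 𝟙_ C ⟶ 𝟙_ C)

lemma trOf_scalarEnd {W : C} (D : LeftDualData W) :
    trOf D (scalarEnd u W) = u ≫ trOf D (𝟙 W) := by
  simp only [trOf, whiskerLeft_scalarEnd, MonoidalCategory.whiskerLeft_id, Category.id_comp]
  rw [reassoc_of% scalarEnd_naturality, scalarEnd_unit]

lemma scalarEnd_trOf_id {W : C} (D : LeftDualData W) (h : (β_ W W).hom = scalarEnd u (W ⊗ W)) :
    scalarEnd (trOf D (𝟙 W)) W = scalarEnd u W := by
  have hexagon : (β_ D.Y W).hom ▷ W = (α_ D.Y W W).hom ≫ D.Y ◁ (β_ W W).hom ≫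
      (α_ D.Y W W).inv ≫ (β_ (D.Y ⊗ W) W).hom ≫ (α_ W D.Y W).inv := by
    rw [braiding_tensor_left_hom]
    simp only [Category.assoc, Iso.inv_hom_id_assoc]
    rw [← MonoidalCategory.whiskerLeft_comp_assoc, SymmetricCategory.symmetry]
    simp
  have hW : trOf D (𝟙 W) ▷ W = scalarEnd u (𝟙_ C ⊗ W) := calc
    trOf D (𝟙 W) ▷ W
        = D.α ▷ W ≫ (α_ D.Y W W).hom ≫ D.Y ◁ scalarEnd u (W ⊗ W) ≫ (α_ D.Y W W).inv ≫
          (β_ (D.Y ⊗ W) W).hom ≫ (α_ W D.Y W).inv ≫ D.αhat ▷ W := by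
      simp only [trOf, MonoidalCategory.whiskerLeft_id, Category.id_comp, comp_whiskerRight,
        hexagon, h, Category.assoc]
    _ = scalarEnd u (𝟙_ C ⊗ W) ≫ (β_ (𝟙_ C) W).hom ≫
          (W ◁ D.α ≫ (α_ W D.Y W).inv ≫ D.αhat ▷ W) := by
      simp only [whiskerLeft_scalarEnd, reassoc_of% scalarEnd_naturality, Iso.hom_inv_id_assoc,
        braiding_naturality_left_assoc]
    _ = scalarEnd u (𝟙_ C ⊗ W) := by
      rw [D.triangle₁', braiding_rightUnitor_assoc]
      simp
  rw [scalarEnd, hW, reassoc_of% scalarEnd_naturality, Iso.inv_hom_id, Category.comp_id]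

lemma trOf_id_eq_of_braiding_eq_scalarEnd {V W : C} (D : LeftDualData W) (δ : 𝟙_ C ≅ V ⊗ W)
    (h : (β_ W W).hom = scalarEnd u (W ⊗ W)) : trOf D (𝟙 W) = u :=
  scalarEnd_injective δ (scalarEnd_trOf_id u D h)

/-- For an invertible object `X` with twist `t_{X,X} = β_{X,X}`, one has
`tr(id_X) = D(t_{X,X}) = tr(t_{X,X})`, where `D` is the `D`-invariant of the self-map
`t_{X,X}` of the invertible object `X ⊗ X`. -/
theorem tr_id_eq_D_twist_eq_tr_twist {X V : C} (DX : LeftDualData X) (hX : IsIso DX.α)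
    (DXX : LeftDualData (X ⊗ X)) (δ : 𝟙_ C ≅ V ⊗ (X ⊗ X)) :
    trOf DX (𝟙 X) = Dinv δ (β_ X X).hom ∧
    trOf DX (𝟙 X) = trOf DXX (β_ X X).hom := by
  set u := Dinv δ (β_ X X).hom
  have hβ : (β_ X X).hom = scalarEnd u (X ⊗ X) := eq_scalarEnd_Dinv δ _
  have hu : u ≫ u = 𝟙 _ := scalarEnd_injective δ <| by
    simp only [← scalarEnd_comp, ← hβ, SymmetricCategory.symmetry, scalarEnd_id]
  have htrX : trOf DX (𝟙 X) = u :=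
    trOf_id_eq_of_braiding_eq_scalarEnd u DX (asIso DX.α) hβ
  have htrXX : trOf DXX (𝟙 (X ⊗ X)) = 𝟙 _ := by
    refine trOf_id_eq_of_braiding_eq_scalarEnd _ DXX δ ?_
    rw [braiding_tensor_self_eq_scalarEnd u hβ, reassoc_of% hu, hu]
  refine ⟨htrX, ?_⟩
  rw [htrX, hβ, trOf_scalarEnd, htrXX, Category.comp_id]
end

section
/- Let X be an invertible object with inverse (Y, α) and α̂ the associated evaluation. Then α⁻¹ = tr(id_X) ∘ α̂ ∘ t_{Y,X} as maps Y ⊗ X → S, and α̂⁻¹ = tr(id_X) ⊗ (t_{Y,X} ∘ α) as maps S → X ⊗ Y, i.e. α̂⁻¹ is the composite S → Y ⊗ X → X ⊗ Y of α and t_{Y,X}, multiplied by the scalar tr(id_X). -/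
open CategoryTheory MonoidalCategory

set_option linter.unusedSectionVars false

section Aux

variable {C : Type*} [Category C] [MonoidalCategory C] [SymmetricCategory C]
variable (X Y : C)

/-- Given one triangle identity for an invertible pairing, the other triangle follows. -/
private lemma aux_triY (α : 𝟙_ C ≅ Y ⊗ X) (αhat : X ⊗ Y ≅ 𝟙_ C)
    (hX : X ◁ α.hom ≫ (α_ X Y X).inv ≫ αhat.hom ▷ X = (ρ_ X).hom ≫ (λ_ X).inv) :
    α.hom ▷ Y ≫ (α_ Y X Y).hom ≫ Y ◁ αhat.hom = (λ_ Y).hom ≫ (ρ_ Y).inv := by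
  set f : Y ⟶ Y :=
    (λ_ Y).inv ≫ α.hom ▷ Y ≫ (α_ Y X Y).hom ≫ Y ◁ αhat.hom ≫ (ρ_ Y).hom with hf
  have stepA : X ◁ f ≫ αhat.hom = αhat.hom := by
    have exch : (X ⊗ Y) ◁ αhat.hom ≫ αhat.hom ▷ 𝟙_ C = αhat.hom ▷ (X ⊗ Y) ≫ 𝟙_ C ◁ αhat.hom :=
      whisker_exchange αhat.hom αhat.hom
    calc X ◁ f ≫ αhat.hom
        = 𝟙 _ ⊗≫ X ◁ (α.hom ▷ Y) ⊗≫ ((X ⊗ Y) ◁ αhat.hom ≫ αhat.hom ▷ 𝟙_ C) ⊗≫ 𝟙 _ := by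
          rw [hf]; monoidal
      _ = 𝟙 _ ⊗≫ X ◁ (α.hom ▷ Y) ⊗≫ (αhat.hom ▷ (X ⊗ Y) ≫ 𝟙_ C ◁ αhat.hom) ⊗≫ 𝟙 _ := by
          rw [exch]
      _ = 𝟙 _ ⊗≫ (X ◁ α.hom ≫ (α_ X Y X).inv ≫ αhat.hom ▷ X) ▷ Y ⊗≫ αhat.hom := by
          monoidal
      _ = 𝟙 _ ⊗≫ ((ρ_ X).hom ≫ (λ_ X).inv) ▷ Y ⊗≫ αhat.hom := by rw [hX]
      _ = αhat.hom := by monoidal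
  have hXf : X ◁ f = 𝟙 (X ⊗ Y) := by
    rw [← cancel_mono αhat.hom, stepA, Category.id_comp]
  have hYXf : (Y ⊗ X) ◁ f = 𝟙 _ := by
    have : Y ◁ (X ◁ f) = 𝟙 _ := by rw [hXf, MonoidalCategory.whiskerLeft_id]
    calc (Y ⊗ X) ◁ f = (α_ Y X Y).hom ≫ Y ◁ (X ◁ f) ≫ (α_ Y X Y).inv := by simp
    _ = 𝟙 _ := by rw [this]; simp
  have h1f : 𝟙_ C ◁ f = 𝟙 _ := by
    have exch2 : (Y ⊗ X) ◁ f ≫ α.inv ▷ Y = α.inv ▷ Y ≫ 𝟙_ C ◁ f :=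
      whisker_exchange α.inv f
    rw [hYXf, Category.id_comp] at exch2
    rw [← cancel_epi (α.inv ▷ Y), ← exch2, Category.comp_id]
  have hfid : f = 𝟙 Y := by
    have := h1f
    rw [MonoidalCategory.id_whiskerLeft] at this
    simpa using congrArg (fun m => (λ_ Y).inv ≫ m ≫ (λ_ Y).hom) this
  rw [hf] at hfid
  calc α.hom ▷ Y ≫ (α_ Y X Y).hom ≫ Y ◁ αhat.hom
      = (λ_ Y).hom ≫ ((λ_ Y).inv ≫ α.hom ▷ Y ≫ (α_ Y X Y).hom ≫ Y ◁ αhat.hom ≫ (ρ_ Y).hom)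
          ≫ (ρ_ Y).inv := by simp
    _ = (λ_ Y).hom ≫ (ρ_ Y).inv := by rw [hfid]; simp

/-- Snake identity: pulling a coevaluation through a comparison map. -/
private lemma aux_snakeA (η η' : 𝟙_ C ⟶ X ⊗ Y) (ε : Y ⊗ X ⟶ 𝟙_ C)
    (T : η ▷ X ≫ (α_ X Y X).hom ≫ X ◁ ε = (λ_ X).hom ≫ (ρ_ X).inv) :
    η ≫ X ◁ ((ρ_ Y).inv ≫ Y ◁ η' ≫ (α_ Y X Y).inv ≫ ε ▷ Y ≫ (λ_ Y).hom) = η' := by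
  calc η ≫ X ◁ ((ρ_ Y).inv ≫ Y ◁ η' ≫ (α_ Y X Y).inv ≫ ε ▷ Y ≫ (λ_ Y).hom)
      = 𝟙 _ ⊗≫ (η ▷ 𝟙_ C ≫ (X ⊗ Y) ◁ η') ⊗≫ X ◁ (ε ▷ Y) ⊗≫ 𝟙 _ := by monoidal
    _ = 𝟙 _ ⊗≫ (𝟙_ C ◁ η' ≫ η ▷ (X ⊗ Y)) ⊗≫ X ◁ (ε ▷ Y) ⊗≫ 𝟙 _ := by
        rw [← whisker_exchange]
    _ = 𝟙 _ ⊗≫ η' ⊗≫ (η ▷ X ≫ (α_ X Y X).hom ≫ X ◁ ε) ▷ Y ⊗≫ 𝟙 _ := by monoidal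
    _ = 𝟙 _ ⊗≫ η' ⊗≫ ((λ_ X).hom ≫ (ρ_ X).inv) ▷ Y ⊗≫ 𝟙 _ := by rw [T]
    _ = η' := by monoidal

/-- Snake identity: pulling an evaluation through a comparison map. -/
private lemma aux_snakeB (η : 𝟙_ C ⟶ X ⊗ Y) (ε ε' : Y ⊗ X ⟶ 𝟙_ C)
    (T : η ▷ X ≫ (α_ X Y X).hom ≫ X ◁ ε = (λ_ X).hom ≫ (ρ_ X).inv) :
    ((ρ_ Y).inv ≫ Y ◁ η ≫ (α_ Y X Y).inv ≫ ε' ▷ Y ≫ (λ_ Y).hom) ▷ X ≫ ε = ε' := by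
  calc ((ρ_ Y).inv ≫ Y ◁ η ≫ (α_ Y X Y).inv ≫ ε' ▷ Y ≫ (λ_ Y).hom) ▷ X ≫ ε
      = 𝟙 _ ⊗≫ Y ◁ (η ▷ X) ⊗≫ (ε' ▷ (Y ⊗ X) ≫ 𝟙_ C ◁ ε) ⊗≫ 𝟙 _ := by monoidal
    _ = 𝟙 _ ⊗≫ Y ◁ (η ▷ X) ⊗≫ ((Y ⊗ X) ◁ ε ≫ ε' ▷ 𝟙_ C) ⊗≫ 𝟙 _ := by
        rw [whisker_exchange]
    _ = 𝟙 _ ⊗≫ Y ◁ (η ▷ X ≫ (α_ X Y X).hom ≫ X ◁ ε) ⊗≫ ε' ⊗≫ 𝟙 _ := by monoidal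
    _ = 𝟙 _ ⊗≫ Y ◁ ((λ_ X).hom ≫ (ρ_ X).inv) ⊗≫ ε' ⊗≫ 𝟙 _ := by rw [T]
    _ = ε' := by monoidal

/-- The two comparison maps between a pairing and a copairing are mutually inverse. -/
private lemma aux_gg (η₁ η₂ : 𝟙_ C ⟶ X ⊗ Y) (ε₁ : Y ⊗ X ⟶ 𝟙_ C) (g2 : Y ⟶ Y)
    (snake6c : η₂ ≫ X ◁ g2 = η₁)
    (TY1 : Y ◁ η₁ ≫ (α_ Y X Y).inv ≫ ε₁ ▷ Y = (ρ_ Y).hom ≫ (λ_ Y).inv) :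
    ((ρ_ Y).inv ≫ Y ◁ η₂ ≫ (α_ Y X Y).inv ≫ ε₁ ▷ Y ≫ (λ_ Y).hom) ≫ g2 = 𝟙 Y := by
  calc ((ρ_ Y).inv ≫ Y ◁ η₂ ≫ (α_ Y X Y).inv ≫ ε₁ ▷ Y ≫ (λ_ Y).hom) ≫ g2
      = 𝟙 _ ⊗≫ Y ◁ η₂ ⊗≫ (ε₁ ▷ Y ≫ 𝟙_ C ◁ g2) ⊗≫ 𝟙 _ := by monoidal
    _ = 𝟙 _ ⊗≫ Y ◁ η₂ ⊗≫ ((Y ⊗ X) ◁ g2 ≫ ε₁ ▷ Y) ⊗≫ 𝟙 _ := by rw [whisker_exchange]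
    _ = 𝟙 _ ⊗≫ Y ◁ (η₂ ≫ X ◁ g2) ⊗≫ (α_ Y X Y).inv ≫ ε₁ ▷ Y ⊗≫ 𝟙 _ := by monoidal
    _ = 𝟙 _ ⊗≫ (Y ◁ η₁ ≫ (α_ Y X Y).inv ≫ ε₁ ▷ Y) ⊗≫ 𝟙 _ := by rw [snake6c]; monoidal
    _ = 𝟙 _ ⊗≫ ((ρ_ Y).hom ≫ (λ_ Y).inv) ⊗≫ 𝟙 _ := by rw [TY1]
    _ = 𝟙 Y := by monoidal

end Aux

/-- Let `X` be invertible with inverse `(Y, α : S ≅ Y ⊗ X)` and let `α̂ : X ⊗ Y ≅ S` be the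
associated evaluation (characterized by the triangle identity).  Writing
`τ = tr(id_X) = α ≫ (Y ◁ 𝟙 X) ≫ t_{Y,X} ≫ α̂`, one has
`α⁻¹ = τ ∘ α̂ ∘ t_{Y,X} : Y ⊗ X ⟶ S` and `α̂⁻¹ = (t_{Y,X} ∘ α) ∘ τ : S ⟶ X ⊗ Y`. -/
theorem alpha_inv_formula {C : Type*} [Category C] [MonoidalCategory C] [SymmetricCategory C]
    (X Y : C) (α : 𝟙_ C ≅ Y ⊗ X) (αhat : X ⊗ Y ≅ 𝟙_ C)
    (h : (ρ_ X).inv ≫ (X ◁ α.hom) ≫ (α_ X Y X).inv ≫ (αhat.hom ▷ X) ≫ (λ_ X).hom = 𝟙 X) :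
    (α.inv = (β_ Y X).hom ≫ αhat.hom ≫
        (α.hom ≫ (Y ◁ 𝟙 X) ≫ (β_ Y X).hom ≫ αhat.hom)) ∧
    (αhat.inv = (α.hom ≫ (Y ◁ 𝟙 X) ≫ (β_ Y X).hom ≫ αhat.hom) ≫
        α.hom ≫ (β_ Y X).hom) := by
  -- the triangle in standard form
  have triX : X ◁ α.hom ≫ (α_ X Y X).inv ≫ αhat.hom ▷ X = (ρ_ X).hom ≫ (λ_ X).inv := by
    simpa using congrArg (fun m => (ρ_ X).hom ≫ m ≫ (λ_ X).inv) h
  -- the other triangle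
  have triY : α.hom ▷ Y ≫ (α_ Y X Y).hom ≫ Y ◁ αhat.hom = (λ_ Y).hom ≫ (ρ_ Y).inv :=
    aux_triY X Y α αhat triX
  -- symmetry of the braiding
  have sβ : (β_ X Y).inv = (β_ Y X).hom := by
    rw [← cancel_epi (β_ X Y).hom]; simp
  -- inverted triangles: the "inverse pairing" (η₁, ε₁) = (α̂⁻¹, α⁻¹) is exact
  have TX1 : αhat.inv ▷ X ≫ (α_ X Y X).hom ≫ X ◁ α.inv = (λ_ X).hom ≫ (ρ_ X).inv := by
    have e : (whiskerLeftIso X α ≪≫ (α_ X Y X).symm ≪≫ whiskerRightIso αhat X) =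
        ρ_ X ≪≫ (λ_ X).symm := Iso.ext (by simpa using triX)
    simpa using congrArg Iso.inv e
  have TY1 : Y ◁ αhat.inv ≫ (α_ Y X Y).inv ≫ α.inv ▷ Y = (ρ_ Y).hom ≫ (λ_ Y).inv := by
    have e : (whiskerRightIso α Y ≪≫ α_ Y X Y ≪≫ whiskerLeftIso Y αhat) =
        λ_ Y ≪≫ (ρ_ Y).symm := Iso.ext (by simpa using triY)
    simpa using congrArg Iso.inv e
  -- the braided flip (η₂, ε₂) = (α ≫ β, β ≫ α̂) of the original pairing, via Mathlib
  letI P0 : ExactPairing Y X :=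
    { coevaluation' := α.hom
      evaluation' := αhat.hom
      coevaluation_evaluation' := triX
      evaluation_coevaluation' := triY }
  have TX2 : (α.hom ≫ (β_ Y X).hom) ▷ X ≫ (α_ X Y X).hom ≫ X ◁ ((β_ Y X).hom ≫ αhat.hom)
      = (λ_ X).hom ≫ (ρ_ X).inv := by
    have t : (α.hom ≫ (β_ X Y).inv) ▷ X ≫ (α_ X Y X).hom ≫ X ◁ ((β_ Y X).hom ≫ αhat.hom)
        = (λ_ X).hom ≫ (ρ_ X).inv :=
      @ExactPairing.evaluation_coevaluation' C _ _ X Y (BraidedCategory.exactPairing_swap Y X)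
    rwa [sβ] at t
  -- the snake comparisons between the two exact pairings
  have snake6a : αhat.inv ≫ X ◁ ((ρ_ Y).inv ≫ Y ◁ (α.hom ≫ (β_ Y X).hom) ≫ (α_ Y X Y).inv ≫
      α.inv ▷ Y ≫ (λ_ Y).hom) = α.hom ≫ (β_ Y X).hom :=
    aux_snakeA X Y αhat.inv (α.hom ≫ (β_ Y X).hom) α.inv TX1
  have snake6b : ((ρ_ Y).inv ≫ Y ◁ αhat.inv ≫ (α_ Y X Y).inv ≫
      ((β_ Y X).hom ≫ αhat.hom) ▷ Y ≫ (λ_ Y).hom) ▷ X ≫ α.inv = (β_ Y X).hom ≫ αhat.hom :=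
    aux_snakeB X Y αhat.inv α.inv ((β_ Y X).hom ≫ αhat.hom) TX1
  have snake6c : (α.hom ≫ (β_ Y X).hom) ≫ X ◁ ((ρ_ Y).inv ≫ Y ◁ αhat.inv ≫ (α_ Y X Y).inv ≫
      ((β_ Y X).hom ≫ αhat.hom) ▷ Y ≫ (λ_ Y).hom) = αhat.inv :=
    aux_snakeA X Y (α.hom ≫ (β_ Y X).hom) αhat.inv ((β_ Y X).hom ≫ αhat.hom) TX2
  have gg : ((ρ_ Y).inv ≫ Y ◁ (α.hom ≫ (β_ Y X).hom) ≫ (α_ Y X Y).inv ≫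
        α.inv ▷ Y ≫ (λ_ Y).hom) ≫
      ((ρ_ Y).inv ≫ Y ◁ αhat.inv ≫ (α_ Y X Y).inv ≫
        ((β_ Y X).hom ≫ αhat.hom) ▷ Y ≫ (λ_ Y).hom) = 𝟙 Y :=
    aux_gg X Y αhat.inv (α.hom ≫ (β_ Y X).hom) α.inv _ snake6c TY1
  -- the trace computed via both pairings agrees
  have T : αhat.inv ≫ (β_ X Y).hom ≫ α.inv = α.hom ≫ (β_ Y X).hom ≫ αhat.hom := by
    have step : (α.hom ≫ (β_ Y X).hom) ≫ (β_ X Y).hom ≫ ((β_ Y X).hom ≫ αhat.hom) =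
        αhat.inv ≫ (β_ X Y).hom ≫ α.inv := by
      rw [← snake6a, ← snake6b]
      calc (αhat.inv ≫ X ◁ ((ρ_ Y).inv ≫ Y ◁ (α.hom ≫ (β_ Y X).hom) ≫ (α_ Y X Y).inv ≫
              α.inv ▷ Y ≫ (λ_ Y).hom)) ≫ (β_ X Y).hom ≫
            (((ρ_ Y).inv ≫ Y ◁ αhat.inv ≫ (α_ Y X Y).inv ≫
              ((β_ Y X).hom ≫ αhat.hom) ▷ Y ≫ (λ_ Y).hom) ▷ X ≫ α.inv)
          = αhat.inv ≫ (X ◁ ((ρ_ Y).inv ≫ Y ◁ (α.hom ≫ (β_ Y X).hom) ≫ (α_ Y X Y).inv ≫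
              α.inv ▷ Y ≫ (λ_ Y).hom) ≫ (β_ X Y).hom) ≫
            ((ρ_ Y).inv ≫ Y ◁ αhat.inv ≫ (α_ Y X Y).inv ≫
              ((β_ Y X).hom ≫ αhat.hom) ▷ Y ≫ (λ_ Y).hom) ▷ X ≫ α.inv := by
            simp only [Category.assoc]
        _ = αhat.inv ≫ ((β_ X Y).hom ≫ ((ρ_ Y).inv ≫ Y ◁ (α.hom ≫ (β_ Y X).hom) ≫
              (α_ Y X Y).inv ≫ α.inv ▷ Y ≫ (λ_ Y).hom) ▷ X) ≫
            ((ρ_ Y).inv ≫ Y ◁ αhat.inv ≫ (α_ Y X Y).inv ≫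
              ((β_ Y X).hom ≫ αhat.hom) ▷ Y ≫ (λ_ Y).hom) ▷ X ≫ α.inv := by
            rw [BraidedCategory.braiding_naturality_right]
        _ = αhat.inv ≫ (β_ X Y).hom ≫
            ((((ρ_ Y).inv ≫ Y ◁ (α.hom ≫ (β_ Y X).hom) ≫ (α_ Y X Y).inv ≫
                α.inv ▷ Y ≫ (λ_ Y).hom) ≫
              ((ρ_ Y).inv ≫ Y ◁ αhat.inv ≫ (α_ Y X Y).inv ≫
                ((β_ Y X).hom ≫ αhat.hom) ▷ Y ≫ (λ_ Y).hom)) ▷ X) ≫ α.inv := by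
            simp only [Category.assoc, MonoidalCategory.comp_whiskerRight]
        _ = αhat.inv ≫ (β_ X Y).hom ≫ α.inv := by rw [gg]; simp
    rw [← step]
    simp
  -- final algebra
  have hs : (β_ X Y).hom = αhat.hom ≫ (α.hom ≫ (β_ Y X).hom ≫ αhat.hom) ≫ α.hom := by
    have := congrArg (fun m => αhat.hom ≫ m ≫ α.hom) T
    simpa using this
  have ττ : (α.hom ≫ (β_ Y X).hom ≫ αhat.hom) ≫ (α.hom ≫ (β_ Y X).hom ≫ αhat.hom) =
      𝟙 (𝟙_ C) := by
    have e1 : α.hom ≫ (β_ Y X).hom ≫ (β_ X Y).hom = α.hom := by simp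
    rw [hs] at e1
    have e2 : ((α.hom ≫ (β_ Y X).hom ≫ αhat.hom) ≫ (α.hom ≫ (β_ Y X).hom ≫ αhat.hom)) ≫
        α.hom = 𝟙 _ ≫ α.hom := by
      simpa [Category.assoc] using e1
    exact (cancel_mono α.hom).mp e2
  constructor
  · -- α.inv
    simp only [MonoidalCategory.whiskerLeft_id, Category.id_comp]
    have key : α.hom ≫ ((β_ Y X).hom ≫ αhat.hom ≫ (α.hom ≫ (β_ Y X).hom ≫ αhat.hom)) =
        𝟙 (𝟙_ C) := by
      simpa [Category.assoc] using ττ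
    calc α.inv
        = α.inv ≫ (α.hom ≫ ((β_ Y X).hom ≫ αhat.hom ≫ (α.hom ≫ (β_ Y X).hom ≫ αhat.hom))) := by
          rw [key, Category.comp_id]
      _ = (β_ Y X).hom ≫ αhat.hom ≫ (α.hom ≫ (β_ Y X).hom ≫ αhat.hom) := by simp
  · -- αhat.inv
    simp only [MonoidalCategory.whiskerLeft_id, Category.id_comp]
    calc αhat.inv
        = (αhat.inv ≫ (β_ X Y).hom ≫ α.inv) ≫ α.hom ≫ (β_ Y X).hom := by simp
      _ = (α.hom ≫ (β_ Y X).hom ≫ αhat.hom) ≫ α.hom ≫ (β_ Y X).hom := by rw [T]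
end

section
/- Let C be an additive symmetric monoidal category with tensor additive in each variable, and let X_1,...,X_n be invertible objects with chosen inverses. Suppose a system of isomorphisms φ_{a,b} : X^a ⊗ X^b → X^{a+b} (for a,b ∈ Z^n) is given, satisfying the pentagon compatibility φ_{a+b,c} ∘ (φ_{a,b} ⊗ id) ∘ associator⁻¹ = φ_{a,b+c} ∘ (id ⊗ φ_{b,c}), with φ_{a,0} and φ_{0,b} the unitors. Then the Z^n-graded abelian group π_*(S) with π_a(S) = C(X^a, S) and product f·g = (f ⊗ g) ∘ φ_{a,b}⁻¹ (composed with S ⊗ S ≅ S) is an associative unital ring, and π_0(S) is central. -/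
/-!
Morphisms into the unit multiply through `λ_𝟙 : 𝟙 ⊗ 𝟙 ≅ 𝟙`, and this product is associative by
the triangle identity and commutative up to the braiding because `β_{𝟙,𝟙} = 𝟙`. Conjugating by
the `φ_{a,b}`, associativity of the graded product reduces to the pentagon for `φ` read backwards,
unitality to the unit conditions on `φ_{a,0}` and `φ_{0,a}`, and centrality of degree `0` to the
fact that those unit conditions identify the braiding `X^0 ⊗ X^a ≅ X^a ⊗ X^0` with
`φ_{a,0}⁻¹ ∘ φ_{0,a}`.
-/

open CategoryTheory MonoidalCategory

variable {C : Type*} [Category C] [MonoidalCategory C] [SymmetricCategory C]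
  [Preadditive C] [MonoidalPreadditive C]

/-- The graded product on `π_*(S)`: for `f : X^a ⟶ S` and `g : X^b ⟶ S`, the composite
`X^{a+b} ≅ X^a ⊗ X^b ⟶ S ⊗ S ≅ S`. -/
def gmul {n : ℕ} (Xpow : (Fin n → ℤ) → C)
    (φ : ∀ a b : Fin n → ℤ, Xpow a ⊗ Xpow b ≅ Xpow (a + b)) {a b : Fin n → ℤ}
    (f : Xpow a ⟶ 𝟙_ C) (g : Xpow b ⟶ 𝟙_ C) : Xpow (a + b) ⟶ 𝟙_ C :=
  (φ a b).inv ≫ (f ⊗ₘ g) ≫ (λ_ (𝟙_ C)).hom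

section UnitMaps

variable {D : Type*} [Category D] [MonoidalCategory D]

theorem tensorHom_leftUnitor_assoc {A B E : D} (f : A ⟶ 𝟙_ D) (g : B ⟶ 𝟙_ D)
    (h : E ⟶ 𝟙_ D) :
    (((f ⊗ₘ g) ≫ (λ_ (𝟙_ D)).hom) ⊗ₘ h) ≫ (λ_ (𝟙_ D)).hom =
      (α_ A B E).hom ≫ (f ⊗ₘ ((g ⊗ₘ h) ≫ (λ_ (𝟙_ D)).hom)) ≫ (λ_ (𝟙_ D)).hom := by
  have htri : (α_ (𝟙_ D) (𝟙_ D) (𝟙_ D)).inv ≫ ((λ_ (𝟙_ D)).hom ▷ 𝟙_ D) =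
      𝟙_ D ◁ (λ_ (𝟙_ D)).hom := by
    rw [Iso.inv_comp_eq, triangle, unitors_equal]
  calc (((f ⊗ₘ g) ≫ (λ_ (𝟙_ D)).hom) ⊗ₘ h) ≫ (λ_ (𝟙_ D)).hom
      = ((f ⊗ₘ g) ⊗ₘ h) ≫ ((λ_ (𝟙_ D)).hom ▷ 𝟙_ D) ≫ (λ_ (𝟙_ D)).hom := by
        rw [← Category.assoc, tensorHom_comp_whiskerRight]
    _ = (α_ A B E).hom ≫ (f ⊗ₘ (g ⊗ₘ h)) ≫ (𝟙_ D ◁ (λ_ (𝟙_ D)).hom) ≫ (λ_ (𝟙_ D)).hom := by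
        rw [← htri, ← associator_naturality_assoc]; simp
    _ = (α_ A B E).hom ≫ (f ⊗ₘ ((g ⊗ₘ h) ≫ (λ_ (𝟙_ D)).hom)) ≫ (λ_ (𝟙_ D)).hom := by
        rw [tensorHom_comp_whiskerLeft_assoc]

theorem braiding_hom_tensorHom_leftUnitor [BraidedCategory D] {A B : D}
    (f : A ⟶ 𝟙_ D) (g : B ⟶ 𝟙_ D) :
    (β_ A B).hom ≫ (g ⊗ₘ f) ≫ (λ_ (𝟙_ D)).hom = (f ⊗ₘ g) ≫ (λ_ (𝟙_ D)).hom := by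
  have hβ : (β_ (𝟙_ D) (𝟙_ D)).hom = 𝟙 _ := by
    rw [braiding_tensorUnit_left, unitors_equal, Iso.hom_inv_id]
  rw [← BraidedCategory.braiding_naturality_assoc, hβ, Category.id_comp]

end UnitMaps

section GradedFamily

variable {D : Type*} [Category D] [MonoidalCategory D] {M : Type*} [AddMonoid M]
  (X : M → D) (φ : ∀ a b : M, X a ⊗ X b ≅ X (a + b))

theorem inv_whiskerRight_associator_of_pentagon {a b c : M}
    (hpent : ((φ a b).hom ▷ X c) ≫ (φ (a + b) c).hom ≫ eqToHom (congrArg X (add_assoc a b c)) =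
      (α_ (X a) (X b) (X c)).hom ≫ (X a ◁ (φ b c).hom) ≫ (φ a (b + c)).hom) :
    (φ (a + b) c).inv ≫ ((φ a b).inv ▷ X c) ≫ (α_ (X a) (X b) (X c)).hom =
      eqToHom (congrArg X (add_assoc a b c)) ≫ (φ a (b + c)).inv ≫ (X a ◁ (φ b c).inv) := by
  rw [← cancel_mono (X a ◁ (φ b c).hom), ← cancel_mono (φ a (b + c)).hom]
  simp only [Category.assoc, ← hpent]
  simp [← comp_whiskerRight_assoc]

variable {X} (ι : 𝟙_ D ≅ X 0)

theorem inv_eq_of_rightUnitor {a : M}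
    (hunitR : (X a ◁ ι.hom) ≫ (φ a 0).hom =
      (ρ_ (X a)).hom ≫ eqToHom (congrArg X (add_zero a).symm)) :
    (φ a 0).inv = eqToHom (congrArg X (add_zero a)) ≫ (ρ_ (X a)).inv ≫ (X a ◁ ι.hom) := by
  rw [← cancel_mono (φ a 0).hom]
  simp [hunitR]

theorem inv_eq_of_leftUnitor {b : M}
    (hunitL : (ι.hom ▷ X b) ≫ (φ 0 b).hom =
      (λ_ (X b)).hom ≫ eqToHom (congrArg X (zero_add b).symm)) :
    (φ 0 b).inv = eqToHom (congrArg X (zero_add b)) ≫ (λ_ (X b)).inv ≫ (ι.hom ▷ X b) := by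
  rw [← cancel_mono (φ 0 b).hom]
  simp [hunitL]

theorem braiding_hom_eq_of_unitors [BraidedCategory D] {a : M}
    (hunitR : (X a ◁ ι.hom) ≫ (φ a 0).hom =
      (ρ_ (X a)).hom ≫ eqToHom (congrArg X (add_zero a).symm))
    (hunitL : (ι.hom ▷ X a) ≫ (φ 0 a).hom =
      (λ_ (X a)).hom ≫ eqToHom (congrArg X (zero_add a).symm)) :
    (β_ (X 0) (X a)).hom =
      (φ 0 a).hom ≫ eqToHom (congrArg X ((zero_add a).trans (add_zero a).symm)) ≫ (φ a 0).inv := by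
  rw [← cancel_epi (ι.hom ▷ X a), ← cancel_mono (φ a 0).hom]
  simp only [Category.assoc, Iso.inv_hom_id, Category.comp_id]
  rw [BraidedCategory.braiding_naturality_left_assoc, braiding_tensorUnit_left,
    Category.assoc, hunitR, Iso.inv_hom_id_assoc, reassoc_of% hunitL]
  simp

end GradedFamily

section HomotopyRing

variable {n : ℕ} {Xpow : (Fin n → ℤ) → C} (φ : ∀ a b : Fin n → ℤ, Xpow a ⊗ Xpow b ≅ Xpow (a + b))

omit [SymmetricCategory C] [Preadditive C] [MonoidalPreadditive C] in
theorem gmul_assoc {a b c : Fin n → ℤ}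
    (hpent : ((φ a b).hom ▷ Xpow c) ≫ (φ (a + b) c).hom ≫
        eqToHom (congrArg Xpow (add_assoc a b c)) =
      (α_ (Xpow a) (Xpow b) (Xpow c)).hom ≫ (Xpow a ◁ (φ b c).hom) ≫ (φ a (b + c)).hom)
    (f : Xpow a ⟶ 𝟙_ C) (g : Xpow b ⟶ 𝟙_ C) (h : Xpow c ⟶ 𝟙_ C) :
    gmul Xpow φ (gmul Xpow φ f g) h =
      eqToHom (congrArg Xpow (add_assoc a b c)) ≫ gmul Xpow φ f (gmul Xpow φ g h) := by
  rw [gmul, gmul, ← whiskerRight_comp_tensorHom_assoc, tensorHom_leftUnitor_assoc,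
    reassoc_of% inv_whiskerRight_associator_of_pentagon Xpow φ hpent,
    whiskerLeft_comp_tensorHom_assoc, gmul, gmul]

omit [SymmetricCategory C] [Preadditive C] [MonoidalPreadditive C] in
theorem gmul_unit_right (ι : 𝟙_ C ≅ Xpow 0) {a : Fin n → ℤ}
    (hunitR : (Xpow a ◁ ι.hom) ≫ (φ a 0).hom =
      (ρ_ (Xpow a)).hom ≫ eqToHom (congrArg Xpow (add_zero a).symm))
    (f : Xpow a ⟶ 𝟙_ C) :
    gmul Xpow φ f ι.inv = eqToHom (congrArg Xpow (add_zero a)) ≫ f := by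
  simp [gmul, inv_eq_of_rightUnitor φ ι hunitR, whiskerLeft_comp_tensorHom_assoc, unitors_equal]

omit [SymmetricCategory C] [Preadditive C] [MonoidalPreadditive C] in
theorem gmul_unit_left (ι : 𝟙_ C ≅ Xpow 0) {a : Fin n → ℤ}
    (hunitL : (ι.hom ▷ Xpow a) ≫ (φ 0 a).hom =
      (λ_ (Xpow a)).hom ≫ eqToHom (congrArg Xpow (zero_add a).symm))
    (f : Xpow a ⟶ 𝟙_ C) :
    gmul Xpow φ ι.inv f = eqToHom (congrArg Xpow (zero_add a)) ≫ f := by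
  simp [gmul, inv_eq_of_leftUnitor φ ι hunitL, whiskerRight_comp_tensorHom_assoc]

omit [SymmetricCategory C] in
theorem add_gmul {a b : Fin n → ℤ} (f f' : Xpow a ⟶ 𝟙_ C) (g : Xpow b ⟶ 𝟙_ C) :
    gmul Xpow φ (f + f') g = gmul Xpow φ f g + gmul Xpow φ f' g := by
  simp [gmul, MonoidalPreadditive.add_tensor]

omit [SymmetricCategory C] in
theorem gmul_add {a b : Fin n → ℤ} (f : Xpow a ⟶ 𝟙_ C) (g g' : Xpow b ⟶ 𝟙_ C) :
    gmul Xpow φ f (g + g') = gmul Xpow φ f g + gmul Xpow φ f g' := by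
  simp [gmul, MonoidalPreadditive.tensor_add]

omit [Preadditive C] [MonoidalPreadditive C] in
theorem gmul_comm_of_degree_zero (ι : 𝟙_ C ≅ Xpow 0) {a : Fin n → ℤ}
    (hunitR : (Xpow a ◁ ι.hom) ≫ (φ a 0).hom =
      (ρ_ (Xpow a)).hom ≫ eqToHom (congrArg Xpow (add_zero a).symm))
    (hunitL : (ι.hom ▷ Xpow a) ≫ (φ 0 a).hom =
      (λ_ (Xpow a)).hom ≫ eqToHom (congrArg Xpow (zero_add a).symm))
    (u : Xpow 0 ⟶ 𝟙_ C) (f : Xpow a ⟶ 𝟙_ C) :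
    gmul Xpow φ u f =
      eqToHom (congrArg Xpow ((zero_add a).trans (add_zero a).symm)) ≫ gmul Xpow φ f u := by
  rw [gmul, ← braiding_hom_tensorHom_leftUnitor, braiding_hom_eq_of_unitors φ ι hunitR hunitL]
  simp [gmul]

end HomotopyRing

theorem graded_homotopy_ring_general {n : ℕ} (Xpow : (Fin n → ℤ) → C)
    (ι : 𝟙_ C ≅ Xpow 0)
    (φ : ∀ a b : Fin n → ℤ, Xpow a ⊗ Xpow b ≅ Xpow (a + b))
    (hunitR : ∀ a, (Xpow a ◁ ι.hom) ≫ (φ a 0).hom =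
      (ρ_ (Xpow a)).hom ≫ eqToHom (congrArg Xpow (add_zero a).symm))
    (hunitL : ∀ b, (ι.hom ▷ Xpow b) ≫ (φ 0 b).hom =
      (λ_ (Xpow b)).hom ≫ eqToHom (congrArg Xpow (zero_add b).symm))
    (hpent : ∀ a b c, ((φ a b).hom ▷ Xpow c) ≫ (φ (a + b) c).hom ≫
        eqToHom (congrArg Xpow (add_assoc a b c)) =
      (α_ (Xpow a) (Xpow b) (Xpow c)).hom ≫ (Xpow a ◁ (φ b c).hom) ≫ (φ a (b + c)).hom) :
    -- associativity
    (∀ (a b c : Fin n → ℤ) (f : Xpow a ⟶ 𝟙_ C) (g : Xpow b ⟶ 𝟙_ C) (h : Xpow c ⟶ 𝟙_ C),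
      gmul Xpow φ (gmul Xpow φ f g) h =
        eqToHom (congrArg Xpow (add_assoc a b c)) ≫ gmul Xpow φ f (gmul Xpow φ g h)) ∧
    -- unitality (the unit is `ι.inv ∈ π_0(S)`)
    (∀ (a : Fin n → ℤ) (f : Xpow a ⟶ 𝟙_ C),
      gmul Xpow φ f ι.inv = eqToHom (congrArg Xpow (add_zero a)) ≫ f) ∧
    (∀ (a : Fin n → ℤ) (f : Xpow a ⟶ 𝟙_ C),
      gmul Xpow φ ι.inv f = eqToHom (congrArg Xpow (zero_add a)) ≫ f) ∧
    -- distributivity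
    (∀ (a b : Fin n → ℤ) (f f' : Xpow a ⟶ 𝟙_ C) (g : Xpow b ⟶ 𝟙_ C),
      gmul Xpow φ (f + f') g = gmul Xpow φ f g + gmul Xpow φ f' g) ∧
    (∀ (a b : Fin n → ℤ) (f : Xpow a ⟶ 𝟙_ C) (g g' : Xpow b ⟶ 𝟙_ C),
      gmul Xpow φ f (g + g') = gmul Xpow φ f g + gmul Xpow φ f g') ∧
    -- centrality of `π_0(S)`
    (∀ (a : Fin n → ℤ) (u : Xpow 0 ⟶ 𝟙_ C) (f : Xpow a ⟶ 𝟙_ C),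
      gmul Xpow φ u f =
        eqToHom (congrArg Xpow ((zero_add a).trans (add_zero a).symm)) ≫ gmul Xpow φ f u) :=
  ⟨fun _ _ _ => gmul_assoc φ (hpent _ _ _),
    fun a => gmul_unit_right φ ι (hunitR a),
    fun a => gmul_unit_left φ ι (hunitL a),
    fun _ _ => add_gmul φ,
    fun _ _ => gmul_add φ,
    fun a => gmul_comm_of_degree_zero φ ι (hunitR a) (hunitL a)⟩

/-- Let `C` be an additive symmetric monoidal category with biadditive tensor, let
`X^a` (`a ∈ ℤⁿ`) be tensor powers of invertible objects, and let `φ_{a,b} : X^a ⊗ X^b ≅ X^{a+b}`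
be a system of isomorphisms satisfying the pentagon compatibility, with `φ_{a,0}`, `φ_{0,b}`
the unitors (via `ι : S ≅ X^0`).  Then the `ℤⁿ`-graded group `π_a(S) = C(X^a, S)` with the
product `f·g = (f ⊗ g) ∘ φ_{a,b}⁻¹` is an associative, unital, distributive ring whose
degree-`0` part is central. -/
theorem graded_homotopy_ring {n : ℕ} (Xpow : (Fin n → ℤ) → C)
    (hinv : ∀ a, ∃ V : C, Nonempty (𝟙_ C ≅ V ⊗ Xpow a))
    (ι : 𝟙_ C ≅ Xpow 0)
    (φ : ∀ a b : Fin n → ℤ, Xpow a ⊗ Xpow b ≅ Xpow (a + b))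
    (hunitR : ∀ a, (Xpow a ◁ ι.hom) ≫ (φ a 0).hom =
      (ρ_ (Xpow a)).hom ≫ eqToHom (congrArg Xpow (add_zero a).symm))
    (hunitL : ∀ b, (ι.hom ▷ Xpow b) ≫ (φ 0 b).hom =
      (λ_ (Xpow b)).hom ≫ eqToHom (congrArg Xpow (zero_add b).symm))
    (hpent : ∀ a b c, ((φ a b).hom ▷ Xpow c) ≫ (φ (a + b) c).hom ≫
        eqToHom (congrArg Xpow (add_assoc a b c)) =
      (α_ (Xpow a) (Xpow b) (Xpow c)).hom ≫ (Xpow a ◁ (φ b c).hom) ≫ (φ a (b + c)).hom) :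
    -- associativity
    (∀ (a b c : Fin n → ℤ) (f : Xpow a ⟶ 𝟙_ C) (g : Xpow b ⟶ 𝟙_ C) (h : Xpow c ⟶ 𝟙_ C),
      gmul Xpow φ (gmul Xpow φ f g) h =
        eqToHom (congrArg Xpow (add_assoc a b c)) ≫ gmul Xpow φ f (gmul Xpow φ g h)) ∧
    -- unitality (the unit is `ι.inv ∈ π_0(S)`)
    (∀ (a : Fin n → ℤ) (f : Xpow a ⟶ 𝟙_ C),
      gmul Xpow φ f ι.inv = eqToHom (congrArg Xpow (add_zero a)) ≫ f) ∧
    (∀ (a : Fin n → ℤ) (f : Xpow a ⟶ 𝟙_ C),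
      gmul Xpow φ ι.inv f = eqToHom (congrArg Xpow (zero_add a)) ≫ f) ∧
    -- distributivity
    (∀ (a b : Fin n → ℤ) (f f' : Xpow a ⟶ 𝟙_ C) (g : Xpow b ⟶ 𝟙_ C),
      gmul Xpow φ (f + f') g = gmul Xpow φ f g + gmul Xpow φ f' g) ∧
    (∀ (a b : Fin n → ℤ) (f : Xpow a ⟶ 𝟙_ C) (g g' : Xpow b ⟶ 𝟙_ C),
      gmul Xpow φ f (g + g') = gmul Xpow φ f g + gmul Xpow φ f g') ∧
    -- centrality of `π_0(S)`
    (∀ (a : Fin n → ℤ) (u : Xpow 0 ⟶ 𝟙_ C) (f : Xpow a ⟶ 𝟙_ C),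
      gmul Xpow φ u f =
        eqToHom (congrArg Xpow ((zero_add a).trans (add_zero a).symm)) ≫ gmul Xpow φ f u) :=
  graded_homotopy_ring_general Xpow ι φ hunitR hunitL hpent
end
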